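/- arXiv:2111.13465 — 2 statements merged into one kernel-verified Lean document; each statement's English description precedes it below -/
import Mathlib

section
/- In the ring ℤ[σ_1,...,σ_{n-k}, q] with the conventions σ_0 = 1, σ_m = 0 for m < 0, and the extended definition σ_r := (−1)^{ℓ(k+1)} q^ℓ σ_p whenever r = ℓn + p with 0 ≤ p < n and n−k < p (i.e., σ_p := 0 if n−k < p < n), the following holds: if a partition λ with at most k parts is contained in a shape admitting an n-rim hook starting at the end of row ℓ_1 and ending in row ℓ_2 (so that the diagram λ' obtained by deleting the rim hook is a partition), then det(σ_{λ_i + j − i})_{1≤i,j≤k} = (−1)^{k−w} q · det(σ_{λ'_i + j − i})_{1≤i,j≤k}, where w = ℓ_2 − ℓ_1 + 1 is the number of rows occupied by the rim hook. -/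
/-!
Write `μᵢ = λᵢ - i` for the shifted parts, so that row `i` of the Giambelli matrix is
`(σ_{μᵢ + j})_j`. Removing the rim hook replaces `μ_{ℓ₁}` by `μ_{ℓ₁} - n` and moves it cyclically
down to position `ℓ₂`, leaving the other shifted parts in order. Since `λ'_{ℓ₂} ≥ 0`, every entry of
row `ℓ₁` has index above `n - k`, so the substitution rule `σ_m = (-1)^{k+1} q σ_{m-n}` pulls
`(-1)^{k+1} q` out of that row; undoing the cycle of length `w` costs the sign `(-1)^{w-1}`.
-/

open MvPolynomial

/-- The quantum variable `q` in `ℤ[σ_1, ..., σ_{n-k}, q]`. -/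
noncomputable def qv (n k : ℕ) : MvPolynomial (Fin (n - k) ⊕ Unit) ℤ :=
  X (Sum.inr ())

/-- `σ_p` for `0 ≤ p < n`: `σ_0 = 1`, a variable for `1 ≤ p ≤ n - k`, `0` for
`n - k < p`. -/
noncomputable def sigP (n k : ℕ) (p : ℕ) : MvPolynomial (Fin (n - k) ⊕ Unit) ℤ :=
  if p = 0 then 1 else if h : p - 1 < n - k then X (Sum.inl ⟨p - 1, h⟩) else 0

/-- The extended class `σ_m` for `m : ℤ`: `σ_m = 0` for `m < 0`, and for
`m = ℓ n + p` with `0 ≤ p < n`, `σ_m = (-1)^{ℓ(k+1)} q^ℓ σ_p`. -/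
noncomputable def sigExt (n k : ℕ) (m : ℤ) : MvPolynomial (Fin (n - k) ⊕ Unit) ℤ :=
  if m < 0 then 0
  else (-1) ^ ((m.toNat / n) * (k + 1)) * qv n k ^ (m.toNat / n) * sigP n k (m.toNat % n)

open Matrix Function

section Substitution

variable {n k : ℕ}

lemma sigExt_of_neg {m : ℤ} (hm : m < 0) : sigExt n k m = 0 := if_pos hm

lemma sigExt_eq_zero_of_lt (hkn : k ≤ n) {m : ℤ} (hkm : (n : ℤ) - k < m) (hmn : m < n) :
    sigExt n k m = 0 := by
  have hdiv : m.toNat / n = 0 := Nat.div_eq_of_lt (by omega)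
  have hmod : m.toNat % n = m.toNat := Nat.mod_eq_of_lt (by omega)
  rw [sigExt, if_neg (by omega), hdiv, hmod, sigP, if_neg (by omega), dif_neg (by omega),
    mul_zero]

lemma sigExt_add_self (hn : 0 < n) {m : ℤ} (hm : 0 ≤ m) :
    sigExt n k (m + n) = (-1) ^ (k + 1) * qv n k * sigExt n k m := by
  have htoNat : (m + n).toNat = m.toNat + n := by omega
  rw [sigExt, sigExt, if_neg (by omega), if_neg (by omega), htoNat, Nat.add_div_right _ hn,
    Nat.add_mod_right]
  ring

theorem sigExt_eq_mul_sigExt_sub (hkn : k < n) {m : ℤ} (hm : (n : ℤ) - k < m) :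
    sigExt n k m = (-1) ^ (k + 1) * qv n k * sigExt n k (m - n) := by
  rcases lt_or_ge m n with hmn | hmn
  · rw [sigExt_eq_zero_of_lt hkn.le hm hmn, sigExt_of_neg (m := m - n) (by omega), mul_zero]
  · simpa using sigExt_add_self (n := n) (k := k) (by omega) (sub_nonneg.2 hmn)

noncomputable def sigRow (n k : ℕ) (m : ℤ) : Fin k → MvPolynomial (Fin (n - k) ⊕ Unit) ℤ :=
  fun j => sigExt n k (m + j)

lemma sigRow_eq_smul_sigRow_sub (hkn : k < n) {m : ℤ} (hm : (n : ℤ) - k < m) :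
    sigRow n k m = ((-1) ^ (k + 1) * qv n k) • sigRow n k (m - n) := by
  funext j
  simp only [sigRow, Pi.smul_apply, smul_eq_mul]
  rw [sigExt_eq_mul_sigExt_sub hkn (by omega), sub_add_eq_add_sub]

end Substitution

theorem det_of_comp_eq_mul_det_of_comp_update_comp_cycleIcc {R α : Type*} [CommRing R] {k : ℕ}
    (row : α → Fin k → R) (μ : Fin k → α) {a b : Fin k} (hab : a ≤ b) {c : R} {x : α}
    (hrow : row (μ a) = c • row x) :
    (of (row ∘ μ)).det =
      (-1) ^ (b - a : ℕ) * c * (of (row ∘ update μ a x ∘ Fin.cycleIcc a b)).det := by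
  have hupdate : of (row ∘ update μ a x) = (of (row ∘ μ)).updateRow a (row x) := by
    rw [comp_update]
    rfl
  have hsmul : (of (row ∘ μ)).det = c * (of (row ∘ update μ a x)).det := by
    rw [hupdate, ← det_updateRow_smul, ← hrow]
    exact congrArg det (updateRow_eq_self _ a).symm
  have hcycle : (of (row ∘ update μ a x ∘ Fin.cycleIcc a b)).det =
      (-1) ^ (b - a : ℕ) * (of (row ∘ update μ a x)).det := by
    have := det_permute (Fin.cycleIcc a b) (of (row ∘ update μ a x))
    rw [Fin.sign_cycleIcc_of_le hab] at this
    exact_mod_cast this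
  have hsq : ((-1 : R) ^ (b - a : ℕ)) * (-1) ^ (b - a : ℕ) = 1 := by
    rw [← pow_add, ← two_mul, pow_mul, neg_one_sq, one_pow]
  rw [hcycle, hsmul, mul_left_comm, ← mul_assoc, ← mul_assoc, hsq, one_mul]

def shiftedParts (k : ℕ) (lam : ℕ → ℤ) (i : Fin k) : ℤ :=
  lam (i + 1) - i

lemma of_sigExt_eq_of_sigRow_comp_shiftedParts (n k : ℕ) (lam : ℕ → ℤ) :
    (of fun i j : Fin k => sigExt n k (lam (i + 1) + (j : ℤ) - (i : ℤ))) =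
      of (sigRow n k ∘ shiftedParts k lam) := by
  refine Matrix.ext fun i j => ?_
  simp only [of_apply, Function.comp_apply, sigRow, shiftedParts]
  congr 1
  ring

lemma shiftedParts_eq_update_comp_cycleIcc {k n : ℕ} {lam lam' : ℕ → ℤ} {ℓ₁ ℓ₂ : ℕ}
    {a b : Fin k} (ha : (a : ℕ) + 1 = ℓ₁) (hb : (b : ℕ) + 1 = ℓ₂) (hab : a ≤ b)
    (h1 : ∀ i, 1 ≤ i → i < ℓ₁ → lam' i = lam i)
    (h2 : ∀ i, ℓ₂ < i → i ≤ k → lam' i = lam i)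
    (h3 : ∀ i, ℓ₁ ≤ i → i + 1 ≤ ℓ₂ → lam' i = lam (i + 1) - 1)
    (h4 : lam' ℓ₂ = lam ℓ₁ - (n : ℤ) + (ℓ₂ : ℤ) - (ℓ₁ : ℤ)) :
    shiftedParts k lam' =
      update (shiftedParts k lam) a (shiftedParts k lam a - n) ∘ Fin.cycleIcc a b := by
  subst ha hb
  have : NeZero k := ⟨a.pos.ne'⟩
  funext i
  rw [Function.comp_apply]
  rcases lt_or_ge i a with hia | hai
  · rw [Fin.cycleIcc_of_lt hia, update_of_ne hia.ne]
    simp only [shiftedParts]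
    rw [h1 _ (by omega) (by omega)]
  rcases lt_trichotomy i b with hib | rfl | hbi
  · have hsucc : ((i + 1 : Fin k) : ℕ) = i + 1 := Fin.val_add_one_of_lt' (by omega)
    rw [Fin.cycleIcc_of_ge_of_lt hai hib, update_of_ne (by omega)]
    simp only [shiftedParts]
    rw [hsucc, h3 _ (by omega) (by omega)]
    push_cast
    ring
  · rw [Fin.cycleIcc_of_last hab, update_self]
    simp only [shiftedParts]
    rw [h4]
    push_cast
    ring
  · rw [Fin.cycleIcc_of_gt hbi, update_of_ne (hab.trans_lt hbi).ne']
    simp only [shiftedParts]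
    rw [h2 _ (by omega) (by omega)]

theorem rim_hook_algorithm_general (n k : ℕ) (hkn : k < n) (lam lam' : ℕ → ℤ) (ℓ₁ ℓ₂ : ℕ)
    (hℓ₁ : 1 ≤ ℓ₁) (hℓ₁₂ : ℓ₁ ≤ ℓ₂) (hℓ₂ : ℓ₂ ≤ k)
    (h1 : ∀ i, 1 ≤ i → i < ℓ₁ → lam' i = lam i)
    (h2 : ∀ i, ℓ₂ < i → i ≤ k → lam' i = lam i)
    (h3 : ∀ i, ℓ₁ ≤ i → i + 1 ≤ ℓ₂ → lam' i = lam (i + 1) - 1)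
    (h4 : lam' ℓ₂ = lam ℓ₁ - (n : ℤ) + (ℓ₂ : ℤ) - (ℓ₁ : ℤ))
    (hanti' : ∀ i, 1 ≤ i → i < k → lam' (i + 1) ≤ lam' i)
    (hnonneg' : 0 ≤ lam' k) :
    Matrix.det (Matrix.of fun i j : Fin k =>
        sigExt n k (lam (i.val + 1) + (j.val : ℤ) - (i.val : ℤ))) =
      (-1) ^ (k - (ℓ₂ - ℓ₁ + 1)) * qv n k *
        Matrix.det (Matrix.of fun i j : Fin k =>
          sigExt n k (lam' (i.val + 1) + (j.val : ℤ) - (i.val : ℤ))) := by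
  have hℓ₂_nonneg : 0 ≤ lam' ℓ₂ := hnonneg'.trans <|
    antitoneOn_of_add_one_le Set.ordConnected_Icc
      (fun i _ hi hi' => hanti' i hi.1 hi'.2)
      ⟨hℓ₁.trans hℓ₁₂, hℓ₂⟩ ⟨by omega, le_rfl⟩ hℓ₂
  let a : Fin k := ⟨ℓ₁ - 1, by omega⟩
  let b : Fin k := ⟨ℓ₂ - 1, by omega⟩
  have ha : (a : ℕ) + 1 = ℓ₁ := Nat.sub_add_cancel hℓ₁
  have hb : (b : ℕ) + 1 = ℓ₂ := Nat.sub_add_cancel (hℓ₁.trans hℓ₁₂)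
  have hab : a ≤ b := Fin.mk_le_mk.2 (by omega)
  have hrow := sigRow_eq_smul_sigRow_sub hkn (m := shiftedParts k lam a)
    (by simp only [shiftedParts, ha]; omega)
  have hdet := det_of_comp_eq_mul_det_of_comp_update_comp_cycleIcc _ _ hab hrow
  rw [← shiftedParts_eq_update_comp_cycleIcc ha hb hab h1 h2 h3 h4] at hdet
  rw [of_sigExt_eq_of_sigRow_comp_shiftedParts, of_sigExt_eq_of_sigRow_comp_shiftedParts, hdet,
    ← mul_assoc, ← pow_add, neg_one_pow_congr (n := k - (ℓ₂ - ℓ₁ + 1))]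
  simp only [Nat.even_iff]
  omega

/-- Rim hook algorithm: if the partition `λ'` is obtained from `λ` (both with at most
`k` parts, given by 1-based integer-valued part functions) by removing an `n`-rim hook
starting at the end of row `ℓ₁` and ending in row `ℓ₂`, then the Giambelli determinants
satisfy `σ_λ = (-1)^{k - w} q σ_{λ'}` with `w = ℓ₂ - ℓ₁ + 1` the number of rows occupied
by the rim hook. -/
theorem rim_hook_algorithm (n k : ℕ) (hkn : k < n) (lam lam' : ℕ → ℤ) (ℓ₁ ℓ₂ : ℕ)
    (hℓ₁ : 1 ≤ ℓ₁) (hℓ₁₂ : ℓ₁ ≤ ℓ₂) (hℓ₂ : ℓ₂ ≤ k)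
    (hanti : ∀ i, 1 ≤ i → i < k → lam (i + 1) ≤ lam i)
    (hnonneg : 0 ≤ lam k)
    (h1 : ∀ i, 1 ≤ i → i < ℓ₁ → lam' i = lam i)
    (h2 : ∀ i, ℓ₂ < i → i ≤ k → lam' i = lam i)
    (h3 : ∀ i, ℓ₁ ≤ i → i + 1 ≤ ℓ₂ → lam' i = lam (i + 1) - 1)
    (h4 : lam' ℓ₂ = lam ℓ₁ - (n : ℤ) + (ℓ₂ : ℤ) - (ℓ₁ : ℤ))
    (hanti' : ∀ i, 1 ≤ i → i < k → lam' (i + 1) ≤ lam' i)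
    (hnonneg' : 0 ≤ lam' k) :
    Matrix.det (Matrix.of fun i j : Fin k =>
        sigExt n k (lam (i.val + 1) + (j.val : ℤ) - (i.val : ℤ))) =
      (-1) ^ (k - (ℓ₂ - ℓ₁ + 1)) * qv n k *
        Matrix.det (Matrix.of fun i j : Fin k =>
          sigExt n k (lam' (i.val + 1) + (j.val : ℤ) - (i.val : ℤ))) :=
  rim_hook_algorithm_general n k hkn lam lam' ℓ₁ ℓ₂ hℓ₁ hℓ₁₂ hℓ₂ h1 h2 h3 h4 hanti' hnonneg'
end

section
/- In ℤ[σ_1,...,σ_{n-k}, q] with conventions σ_0 = 1, σ_m = 0 for m < 0 or n−k < m < n, and σ_n := (−1)^{k+1} q: for any partition λ' with λ'_1 = n−k+1 and λ'_i ≤ n−k for i ≥ 2, with at most k parts, the Giambelli determinant satisfies det(σ_{λ'_i + j − i})_{1≤i,j≤k} = q · det(σ_{λ'_{i+1} − 1 + j − i})_{1≤i,j≤k−1}, i.e., σ_{λ'} = q · σ_{(λ'_2 − 1, ..., λ'_k − 1)}. -/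
/-!
The first row of the Giambelli matrix is `σ_{n-k+1}, …, σ_n`. All entries but the last lie in
the gap `n - k < m < n`, where `σ_m = 0`, and `σ_n = (-1)^(k+1) q`. Expanding along the first row
leaves `(-1)^(k+1) q` times the signed minor obtained by deleting the first row and last column,
and that minor is the Giambelli matrix of `(λ'_2 - 1, …, λ'_k - 1)`; the two signs cancel.
-/

open MvPolynomial

theorem Matrix.det_succ_of_row_zero_eq_zero_of_ne_last {R : Type*} [CommRing R] {m : ℕ}
    (A : Matrix (Fin (m + 1)) (Fin (m + 1)) R) (hA : ∀ j ≠ Fin.last m, A 0 j = 0) :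
    A.det = (-1) ^ m * A 0 (Fin.last m) * (A.submatrix Fin.succ Fin.castSucc).det := by
  rw [Matrix.det_succ_row_zero, Finset.sum_eq_single (Fin.last m)]
  · simp only [Fin.val_last, Fin.succAbove_last]
  · intro j _ hj
    rw [hA j hj, mul_zero, zero_mul]
  · exact fun h => (h (Finset.mem_univ _)).elim

theorem sigExt_eq_zero_of_lt_of_lt {n k : ℕ} {m : ℤ} (h₁ : ((n - k : ℕ) : ℤ) < m) (h₂ : m < n) :
    sigExt n k m = 0 := by
  have h₁' : n - k < m.toNat := by omega
  have h₂' : m.toNat < n := by omega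
  rw [sigExt, if_neg (by omega), Nat.div_eq_of_lt h₂', Nat.mod_eq_of_lt h₂', sigP,
    if_neg (by omega), dif_neg (by omega), mul_zero]

theorem sigExt_self {n : ℕ} (k : ℕ) (hn : 0 < n) : sigExt n k n = (-1) ^ (k + 1) * qv n k := by
  rw [sigExt, if_neg (by omega), Int.toNat_natCast, Nat.div_self hn, Nat.mod_self, sigP,
    if_pos rfl, one_mul, pow_one, mul_one]

theorem quantum_pieri_rim_hook_general (n k : ℕ) (hkn : k < n) (hk : 1 ≤ k) (lam' : ℕ → ℤ)
    (hfirst : lam' 1 = (n : ℤ) - (k : ℤ) + 1) :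
    Matrix.det (Matrix.of fun i j : Fin k =>
        sigExt n k (lam' (i.val + 1) + (j.val : ℤ) - (i.val : ℤ))) =
      qv n k * Matrix.det (Matrix.of fun i j : Fin (k - 1) =>
        sigExt n k (lam' (i.val + 2) - 1 + (j.val : ℤ) - (i.val : ℤ))) := by
  obtain ⟨m, rfl⟩ : ∃ m, k = m + 1 := ⟨k - 1, by omega⟩
  rw [Matrix.det_succ_of_row_zero_eq_zero_of_ne_last]
  · have hcorner : lam' (0 + 1) + (m : ℤ) - ((0 : ℕ) : ℤ) = n := by
      rw [zero_add, hfirst]; push_cast; ring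
    have hminor : (Matrix.of fun i j : Fin (m + 1) =>
          sigExt n (m + 1) (lam' (i.val + 1) + (j.val : ℤ) - (i.val : ℤ))).submatrix
          Fin.succ Fin.castSucc =
        Matrix.of fun i j : Fin (m + 1 - 1) =>
          sigExt n (m + 1) (lam' (i.val + 2) - 1 + (j.val : ℤ) - (i.val : ℤ)) := by
      ext i j : 1
      simp only [Matrix.submatrix_apply, Matrix.of_apply, Fin.val_succ, Fin.val_castSucc]
      congr 1
      push_cast
      ring
    rw [hminor, Matrix.of_apply, Fin.val_last, Fin.val_zero, hcorner, sigExt_self _ (by omega),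
      ← mul_assoc, ← pow_add, show m + (m + 1 + 1) = 2 * (m + 1) by ring,
      pow_mul, neg_one_sq, one_pow, one_mul]
  · intro j hj
    have hjm : (j : ℕ) < m := Fin.val_lt_last hj
    rw [Matrix.of_apply]
    apply sigExt_eq_zero_of_lt_of_lt <;> simp only [Fin.val_zero, hfirst] <;> push_cast <;> omega

/-- One-rim-hook computation in quantum Pieri: for a partition `λ'` with at most `k`
parts, `λ'_1 = n - k + 1` and `λ'_i ≤ n - k` for `i ≥ 2`, the Giambelli determinant
factors as `σ_{λ'} = q · σ_{(λ'_2 - 1, ..., λ'_k - 1)}`. -/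
theorem quantum_pieri_rim_hook (n k : ℕ) (hkn : k < n) (hk : 1 ≤ k) (lam' : ℕ → ℤ)
    (hfirst : lam' 1 = (n : ℤ) - (k : ℤ) + 1)
    (hbound : ∀ i, 2 ≤ i → i ≤ k → lam' i ≤ (n : ℤ) - (k : ℤ))
    (hanti : ∀ i, 1 ≤ i → i < k → lam' (i + 1) ≤ lam' i)
    (hnonneg : ∀ i, 2 ≤ i → i ≤ k → 0 ≤ lam' i) :
    Matrix.det (Matrix.of fun i j : Fin k =>
        sigExt n k (lam' (i.val + 1) + (j.val : ℤ) - (i.val : ℤ))) =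
      qv n k * Matrix.det (Matrix.of fun i j : Fin (k - 1) =>
        sigExt n k (lam' (i.val + 2) - 1 + (j.val : ℤ) - (i.val : ℤ))) :=
  quantum_pieri_rim_hook_general n k hkn hk lam' hfirst
end
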